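/- Let β ∈ {⊤,⊥}^m and let β̄ be the opposite hybridization, defined by β̄_i ≠ β_i for all i. The left–right mirror map — sending a filling T to the filling T' with T'(i,j) the reflection of T(i, n+1−j) obtained by exchanging the roles of the E and W edges of the cell — is a bijection from the set of hybrid generic pipe dreams of type β with connectivity π to the set of hybrid generic pipe dreams of type β̄ with connectivity γ_n π γ_m, where γ_n π γ_m ∈ S_{m,n} denotes the map i ↦ n+1−π(m+1−i). -/

import Mathlib

/-! # Hybrid generic pipe dreams -/

/-- Tiles: sets of pipe segments in a unit cell. `wn` = {W–N}, `se` = {S–E},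
`wnse` = {W–N, S–E}, `en` = {E–N}, `sw` = {S–W}, `ensw` = {E–N, S–W}, `we` = {W–E},
`sn` = {S–N}, `wesn` = {W–E, S–N} (crossing), `blank` = ∅. -/
inductive Tile
  | blank | wn | se | wnse | en | sw | ensw | we | sn | wesn
  deriving DecidableEq

instance : Fintype Tile :=
  ⟨{.blank, .wn, .se, .wnse, .en, .sw, .ensw, .we, .sn, .wesn}, fun x => by cases x <;> decide⟩

namespace Tile

/-- The West edge is occupied. -/
def occW : Tile → Bool
  | wn | wnse | we | wesn | sw | ensw => true
  | _ => false

/-- The East edge is occupied. -/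
def occE : Tile → Bool
  | se | wnse | we | wesn | en | ensw => true
  | _ => false

/-- The North edge is occupied. -/
def occN : Tile → Bool
  | wn | wnse | sn | wesn | en | ensw => true
  | _ => false

/-- The South edge is occupied. -/
def occS : Tile → Bool
  | se | wnse | sn | wesn | sw | ensw => true
  | _ => false

/-- Elbow tiles. -/
def isElbow : Tile → Bool
  | wn | se | wnse | en | sw | ensw => true
  | _ => false

/-- Straight tiles. -/
def isStraight : Tile → Bool
  | we | sn | wesn => true
  | _ => false

/-- Left-right mirror image of a tile (exchanging the roles of the E and W edges). -/
def mirror : Tile → Tile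
  | wn => en | en => wn | se => sw | sw => se | wnse => ensw | ensw => wnse
  | t => t

end Tile

/-- The allowed tiles in a row of type `⊤` (`true`) resp. `⊥` (`false`). -/
def allowedIn (rt : Bool) (t : Tile) : Prop :=
  if rt then
    t = .blank ∨ t = .wn ∨ t = .se ∨ t = .wnse ∨ t = .we ∨ t = .sn ∨ t = .wesn
  else
    t = .blank ∨ t = .en ∨ t = .sw ∨ t = .ensw ∨ t = .we ∨ t = .sn ∨ t = .wesn

section Routing

variable {ι : Type*}

/-- In a `⊤`-row tile, the pipe exiting East given the pipes entering from West and South. -/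
def eOutT : Tile → Option ι → Option ι → Option ι
  | .se, _, s => s
  | .wnse, _, s => s
  | .we, w, _ => w
  | .wesn, w, _ => w
  | _, _, _ => none

/-- In a `⊤`-row tile, the pipe exiting North given the pipes entering from West and South. -/
def nOutT : Tile → Option ι → Option ι → Option ι
  | .wn, w, _ => w
  | .wnse, w, _ => w
  | .sn, _, s => s
  | .wesn, _, s => s
  | _, _, _ => none

/-- Tracing a `⊤`-type row left to right: the pipe on the vertical edge left of column `j`,
where `bot j` is the pipe entering column `j` from the South and `enter` enters from the West. -/
def hTrace (t : ℕ → Tile) (bot : ℕ → Option ι) (enter : Option ι) : ℕ → Option ι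
  | 0 => enter
  | j + 1 => eOutT (t j) (hTrace t bot enter j) (bot j)

/-- The pipe exiting North from column `j` of a `⊤`-type row. -/
def topOutT (t : ℕ → Tile) (bot : ℕ → Option ι) (enter : Option ι) (j : ℕ) : Option ι :=
  nOutT (t j) (hTrace t bot enter j) (bot j)

/-- The pipe exiting North from column `j` of a `⊥`-type row with `n` columns (the pipe
`enter` enters from the East); computed by mirroring. -/
def topOutB (n : ℕ) (t : ℕ → Tile) (bot : ℕ → Option ι) (enter : Option ι) (j : ℕ) :
    Option ι :=
  topOutT (fun j' => (t (n - 1 - j')).mirror) (fun j' => bot (n - 1 - j')) enter (n - 1 - j)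

/-- The pipe exiting North from column `j` of a row of type `rt`. -/
def rowTop (rt : Bool) (n : ℕ) (t : ℕ → Tile) (bot : ℕ → Option ι) (enter : Option ι)
    (j : ℕ) : Option ι :=
  if rt then topOutT t bot enter j else topOutB n t bot enter j

end Routing

/-- The row-`i` tiles of a filling, as a `ℕ`-indexed family. -/
def tilesOf {m n : ℕ} (f : Fin m → Fin n → Tile) (i : Fin m) : ℕ → Tile :=
  fun j => if h : j < n then f i ⟨j, h⟩ else Tile.blank

/-- The pipes (labeled by the row in which they enter) crossing the horizontal line `m - r`
of the grid (so `r = 0` is the South boundary and `r = m` the North boundary). -/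
def lineState (m n : ℕ) (β : Fin m → Bool) (f : Fin m → Fin n → Tile) :
    ℕ → ℕ → Option (Fin m)
  | 0, _ => none
  | r + 1, j =>
    if h : r < m then
      rowTop (β ⟨m - 1 - r, by omega⟩) n (tilesOf f ⟨m - 1 - r, by omega⟩)
        (fun j' => lineState m n β f r j') (some ⟨m - 1 - r, by omega⟩) j
    else lineState m n β f r j

/-- The pipe exiting through the North boundary at column `j`. -/
def northExit (m n : ℕ) (β : Fin m → Bool) (f : Fin m → Fin n → Tile) (j : Fin n) :
    Option (Fin m) :=
  lineState m n β f m (j : ℕ)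

private theorem filter_card_lt {m : ℕ} (i : Fin m) (p : Fin m → Prop) [DecidablePred p]
    (h : ∀ a, p a → a ≠ i) : (Finset.univ.filter p).card < m := by
  have hsub : Finset.univ.filter p ⊆ Finset.univ.erase i := fun a ha =>
    Finset.mem_erase.mpr ⟨h a (Finset.mem_filter.mp ha).2, Finset.mem_univ a⟩
  calc (Finset.univ.filter p).card ≤ (Finset.univ.erase i).card := Finset.card_le_card hsub
    _ < Finset.univ.card := Finset.card_erase_lt_of_mem (Finset.mem_univ i)
    _ = m := by simp

/-- The number `φ_β(i)` (0-indexed) of the pipe entering in row `i`: pipes are numbered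
counterclockwise starting from the NW corner. -/
def pipeNo {m : ℕ} (β : Fin m → Bool) (i : Fin m) : Fin m :=
  if hβ : β i then
    ⟨(Finset.univ.filter (fun a => a < i ∧ β a)).card,
      filter_card_lt i _ (fun a ha => ne_of_lt ha.1)⟩
  else
    ⟨(Finset.univ.filter (fun a : Fin m => β a)).card +
        (Finset.univ.filter (fun a : Fin m => i < a ∧ ¬(β a : Prop))).card, by
      have hd : Disjoint (Finset.univ.filter (fun a : Fin m => (β a : Prop)))
          (Finset.univ.filter (fun a : Fin m => i < a ∧ ¬(β a : Prop))) := by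
        rw [Finset.disjoint_left]
        intro a ha hb
        exact (Finset.mem_filter.mp hb).2.2 (Finset.mem_filter.mp ha).2
      rw [← Finset.card_union_of_disjoint hd, ← Finset.filter_or]
      refine filter_card_lt i _ ?_
      rintro a (h1 | ⟨h2, _⟩)
      · rintro rfl; exact hβ h1
      · exact ne_of_gt h2⟩

/-- A hybrid generic pipe dream of type `β`: allowed tiles, matching of occupied edges,
unoccupied South boundary, and entering conditions on the West/East boundaries. -/
def IsHGPD (m n : ℕ) (β : Fin m → Bool) (f : Fin m → Fin n → Tile) : Prop :=
  (∀ i j, allowedIn (β i) (f i j)) ∧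
  (∀ (i : Fin m) (j : Fin n) (h : (j : ℕ) + 1 < n),
    (f i j).occE = (f i ⟨j + 1, h⟩).occW) ∧
  (∀ (i : Fin m) (h : (i : ℕ) + 1 < m) (j : Fin n),
    (f i j).occS = (f ⟨i + 1, h⟩ j).occN) ∧
  (∀ (i : Fin m) (j : Fin n), (i : ℕ) + 1 = m → (f i j).occS = false) ∧
  (∀ (i : Fin m) (j : Fin n), (j : ℕ) = 0 → (f i j).occW = β i) ∧
  (∀ (i : Fin m) (j : Fin n), (j : ℕ) + 1 = n → (f i j).occE = !β i)

/-- The pipe dream has connectivity `π`: the pipe numbered `k` exits the North side in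
column `π(k)`; equivalently the pipe entering in row `i` exits in column `π(φ_β(i))`. -/
def Connectivity (m n : ℕ) (β : Fin m → Bool) (f : Fin m → Fin n → Tile)
    (π : Fin m ↪ Fin n) : Prop :=
  ∀ i : Fin m, northExit m n β f (π (pipeNo β i)) = some i

/-! ## Weights -/

/-- Variable set for `ℤ[x_1,…,x_m,y_1,…,y_n,A,B]`: `none` is `B`, `some (inl i)` is `x_i`,
`some (inr (inl j))` is `y_j`, `some (inr (inr ()))` is `A`. -/
abbrev PDVar (m n : ℕ) := Option (Fin m ⊕ (Fin n ⊕ Unit))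

noncomputable def xP (m n : ℕ) (i : Fin m) : MvPolynomial (PDVar m n) ℤ :=
  MvPolynomial.X (some (Sum.inl i))

noncomputable def yP (m n : ℕ) (j : Fin n) : MvPolynomial (PDVar m n) ℤ :=
  MvPolynomial.X (some (Sum.inr (Sum.inl j)))

noncomputable def AP (m n : ℕ) : MvPolynomial (PDVar m n) ℤ :=
  MvPolynomial.X (some (Sum.inr (Sum.inr ())))

noncomputable def BP (m n : ℕ) : MvPolynomial (PDVar m n) ℤ :=
  MvPolynomial.X none

/-- The weight of the tile in cell `(i,j)` of a row of type `rt` whose entering pipe is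
numbered `k`. -/
noncomputable def tileWt (m n : ℕ) (rt : Bool) (t : Tile) (k : Fin m) (j : Fin n) :
    MvPolynomial (PDVar m n) ℤ :=
  if t.isElbow then AP m n + BP m n
  else if t.isStraight then
    (if rt then AP m n + xP m n k - yP m n j else BP m n - xP m n k + yP m n j)
  else
    (if rt then BP m n - xP m n k + yP m n j else AP m n + xP m n k - yP m n j)

/-- The weight of a pipe dream: the product of the weights of its tiles. -/
noncomputable def pdWeight (m n : ℕ) (β : Fin m → Bool) (f : Fin m → Fin n → Tile) :
    MvPolynomial (PDVar m n) ℤ :=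
  ∏ i : Fin m, ∏ j : Fin n, tileWt m n (β i) (f i j) (pipeNo β i) j

open Classical in
/-- The generic pipe dream polynomial `G_π^β`: the sum of the weights of all hybrid generic
pipe dreams of type `β` with connectivity `π`. -/
noncomputable def GPD (m n : ℕ) (β : Fin m → Bool) (π : Fin m ↪ Fin n) :
    MvPolynomial (PDVar m n) ℤ :=
  ∑ f ∈ Finset.univ.filter
      (fun f : Fin m → Fin n → Tile => IsHGPD m n β f ∧ Connectivity m n β f π),
    pdWeight m n β f

/-- The left-right mirror image of a filling: exchange the roles of E and W edges of the
tile, and reverse the order of the columns. -/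
def mirrorPD {m n : ℕ} (f : Fin m → Fin n → Tile) : Fin m → Fin n → Tile :=
  fun i j => (f i j.rev).mirror

/-- `γ_n π γ_m ∈ S_{m,n}`: the map `i ↦ n+1−π(m+1−i)`. -/
def revConj {m n : ℕ} (π : Fin m ↪ Fin n) : Fin m ↪ Fin n :=
  ⟨fun i => (π i.rev).rev, fun a b h =>
    Fin.rev_injective (π.injective (Fin.rev_injective h))⟩

open Finset

/-!
Reflecting a filling left–right turns every `⊤` row into a `⊥` row and vice versa, and the
routing of a `⊥` row is by definition the routing of its reflection; so, row by row from the
South boundary, the pipe crossing column `j` of a horizontal line in the mirror image is the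
one crossing column `n+1−j` in the original. Swapping `⊤` and `⊥` reverses the
counterclockwise numbering of the entry points, `φ_β̄(i) = m+1−φ_β(i)`, which turns the
connectivity `π` into `γ_n π γ_m`. As the mirror map is an involution, it is a bijection.
-/

namespace Tile

@[simp] lemma mirror_mirror (t : Tile) : t.mirror.mirror = t := by cases t <;> rfl

@[simp] lemma occW_mirror (t : Tile) : t.mirror.occW = t.occE := by cases t <;> rfl

@[simp] lemma occE_mirror (t : Tile) : t.mirror.occE = t.occW := by cases t <;> rfl

@[simp] lemma occN_mirror (t : Tile) : t.mirror.occN = t.occN := by cases t <;> rfl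

@[simp] lemma occS_mirror (t : Tile) : t.mirror.occS = t.occS := by cases t <;> rfl

end Tile

lemma allowedIn_not_mirror {rt : Bool} {t : Tile} (h : allowedIn rt t) :
    allowedIn (!rt) t.mirror := by
  cases rt <;> cases t <;> simp_all [allowedIn, Tile.mirror]

@[simp] lemma mirrorPD_mirrorPD {m n : ℕ} (f : Fin m → Fin n → Tile) :
    mirrorPD (mirrorPD f) = f := by
  funext i j
  simp [mirrorPD]

@[simp] lemma revConj_revConj {m n : ℕ} (π : Fin m ↪ Fin n) : revConj (revConj π) = π := by
  refine Function.Embedding.ext fun i => ?_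
  change (π i.rev.rev).rev.rev = π i
  rw [Fin.rev_rev, Fin.rev_rev]

lemma isHGPD_mirrorPD {m n : ℕ} {β : Fin m → Bool} {f : Fin m → Fin n → Tile}
    (hf : IsHGPD m n β f) : IsHGPD m n (fun i => !β i) (mirrorPD f) := by
  obtain ⟨hallowed, hhor, hver, hsouth, hwest, heast⟩ := hf
  refine ⟨fun i j => allowedIn_not_mirror (hallowed i j.rev), ?_, fun i h j => ?_,
    fun i j h => ?_, fun i j h => ?_, fun i j h => ?_⟩
  · intro i j h
    have hj : ((⟨j + 1, h⟩ : Fin n).rev : ℕ) + 1 < n := by simp; omega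
    have hcol : (⟨(⟨j + 1, h⟩ : Fin n).rev + 1, hj⟩ : Fin n) = j.rev := Fin.ext (by simp; omega)
    have := (hhor i _ hj).symm
    rw [hcol] at this
    simpa [mirrorPD] using this
  · simpa [mirrorPD] using hver i h j.rev
  · simpa [mirrorPD] using hsouth i j.rev h
  · simpa [mirrorPD] using heast i j.rev (by simp; omega)
  · simpa [mirrorPD] using hwest i j.rev (by simp; omega)

section Routing

variable {ι : Type*}

lemma hTrace_congr {t t' : ℕ → Tile} {b b' : ℕ → Option ι} {e : Option ι} :
    ∀ j : ℕ, (∀ j' < j, t j' = t' j') → (∀ j' < j, b j' = b' j') →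
      hTrace t b e j = hTrace t' b' e j
  | 0, _, _ => rfl
  | j + 1, ht, hb => by
    simp only [hTrace]
    rw [hTrace_congr j (fun j' h => ht j' (by omega)) (fun j' h => hb j' (by omega)),
      ht j (by omega), hb j (by omega)]

lemma topOutT_congr {t t' : ℕ → Tile} {b b' : ℕ → Option ι} {e : Option ι} (j : ℕ)
    (ht : ∀ j' ≤ j, t j' = t' j') (hb : ∀ j' ≤ j, b j' = b' j') :
    topOutT t b e j = topOutT t' b' e j := by
  unfold topOutT
  rw [hTrace_congr j (fun j' h => ht j' h.le) (fun j' h => hb j' h.le), ht j le_rfl,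
    hb j le_rfl]

lemma rowTop_not_of_mirror {n : ℕ} (rt : Bool) {t t' : ℕ → Tile} {b b' : ℕ → Option ι}
    (e : Option ι) (ht : ∀ j < n, t' j = (t (n - 1 - j)).mirror)
    (hb : ∀ j < n, b' j = b (n - 1 - j)) {j : ℕ} (hj : j < n) :
    rowTop (!rt) n t' b' e j = rowTop rt n t b e (n - 1 - j) := by
  cases rt
  · simp only [rowTop, Bool.not_false, if_true, topOutB, Bool.false_eq_true, if_false]
    rw [show n - 1 - (n - 1 - j) = j by omega]
    exact topOutT_congr j (fun j' h => ht j' (by omega)) (fun j' h => hb j' (by omega))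
  · simp only [rowTop, Bool.not_true, Bool.false_eq_true, if_false, topOutB, if_true]
    refine topOutT_congr _ (fun j' h => ?_) (fun j' h => ?_)
    · rw [ht _ (by omega), Tile.mirror_mirror, show n - 1 - (n - 1 - j') = j' by omega]
    · rw [hb _ (by omega), show n - 1 - (n - 1 - j') = j' by omega]

end Routing

lemma tilesOf_mirrorPD {m n : ℕ} (f : Fin m → Fin n → Tile) (i : Fin m) {j : ℕ}
    (hj : j < n) : tilesOf (mirrorPD f) i j = (tilesOf f i (n - 1 - j)).mirror := by
  rw [tilesOf, tilesOf, dif_pos hj, dif_pos (by omega)]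
  simp only [mirrorPD]
  congr 2
  ext
  simp only [Fin.val_rev]
  omega

lemma lineState_mirrorPD {m n : ℕ} (β : Fin m → Bool) (f : Fin m → Fin n → Tile) :
    ∀ (r : ℕ) {j : ℕ}, j < n →
      lineState m n (fun i => !β i) (mirrorPD f) r j = lineState m n β f r (n - 1 - j)
  | 0, _, _ => rfl
  | r + 1, j, hj => by
    by_cases hr : r < m
    · simp only [lineState, dif_pos hr]
      exact rowTop_not_of_mirror _ _ (fun j' hj' => tilesOf_mirrorPD f _ hj')
        (fun j' hj' => lineState_mirrorPD β f r hj') hj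
    · simp only [lineState, dif_neg hr]
      exact lineState_mirrorPD β f r hj

lemma northExit_mirrorPD {m n : ℕ} (β : Fin m → Bool) (f : Fin m → Fin n → Tile)
    (j : Fin n) : northExit m n (fun i => !β i) (mirrorPD f) j = northExit m n β f j.rev := by
  rw [northExit, northExit, lineState_mirrorPD β f m j.isLt, Fin.val_rev]
  congr 1
  omega

lemma card_filter_eq_lt_add_gt_add_one {m : ℕ} (p : Fin m → Prop) [DecidablePred p]
    {i : Fin m} (hi : p i) :
    #{a | p a} = #{a | a < i ∧ p a} + #{a | i < a ∧ p a} + 1 := by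
  have hsplit : univ.filter p =
      insert i (univ.filter (fun a => a < i ∧ p a) ∪ univ.filter (fun a => i < a ∧ p a)) := by
    ext a
    simp only [mem_filter, mem_univ, true_and, mem_insert,
      mem_union]
    rcases lt_trichotomy a i with h | rfl | h
    · simp [h, h.ne]
    · simp [hi]
    · simp [h, h.ne', h.not_gt]
  have hdisj : Disjoint (univ.filter (fun a => a < i ∧ p a))
      (univ.filter (fun a => i < a ∧ p a)) :=
    disjoint_filter.2 fun a _ h h' => (h.1.trans h'.1).false
  rw [hsplit, card_insert_of_notMem (by simp), card_union_of_disjoint hdisj]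

lemma pipeNo_add_pipeNo_not_of_top {m : ℕ} {β : Fin m → Bool} {i : Fin m} (hi : β i = true) :
    (pipeNo β i : ℕ) + pipeNo (fun a => !β a) i = m - 1 := by
  have hcard : #{a | β a = true} + #{a | ¬β a = true} = m := by
    rw [card_filter_add_card_filter_not, card_univ, Fintype.card_fin]
  have := card_filter_eq_lt_add_gt_add_one (fun a => β a = true) hi
  simp only [pipeNo, hi, dite_true, Bool.not_true, Bool.false_eq_true, dite_false,
    Bool.not_eq_true', Bool.not_eq_false]
  simp only [Bool.not_eq_true] at hcard
  omega

lemma pipeNo_not {m : ℕ} (β : Fin m → Bool) (i : Fin m) :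
    pipeNo (fun a => !β a) i = (pipeNo β i).rev := by
  have hsum : (pipeNo β i : ℕ) + pipeNo (fun a => !β a) i = m - 1 := by
    cases hi : β i
    · have h := pipeNo_add_pipeNo_not_of_top (β := fun a => !β a) (i := i) (by simp [hi])
      rw [show (fun a => !!β a) = β from funext fun a => Bool.not_not _] at h
      omega
    · exact pipeNo_add_pipeNo_not_of_top hi
  ext
  have := (pipeNo β i).isLt
  rw [Fin.val_rev]
  omega

lemma connectivity_mirrorPD {m n : ℕ} {β : Fin m → Bool} {f : Fin m → Fin n → Tile}
    {π : Fin m ↪ Fin n} (hf : Connectivity m n β f π) :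
    Connectivity m n (fun i => !β i) (mirrorPD f) (revConj π) := by
  intro i
  change northExit m n _ _ (π (pipeNo _ i).rev).rev = some i
  rw [pipeNo_not, Fin.rev_rev, northExit_mirrorPD, Fin.rev_rev]
  exact hf i

lemma mapsTo_mirrorPD (m n : ℕ) (β : Fin m → Bool) (π : Fin m ↪ Fin n) :
    Set.MapsTo (mirrorPD (m := m) (n := n))
      { f | IsHGPD m n β f ∧ Connectivity m n β f π }
      { f | IsHGPD m n (fun i => !β i) f ∧
        Connectivity m n (fun i => !β i) f (revConj π) } :=
  fun _ hf => ⟨isHGPD_mirrorPD hf.1, connectivity_mirrorPD hf.2⟩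

theorem mirror_bijection_general (m n : ℕ)
    (β : Fin m → Bool) (π : Fin m ↪ Fin n) :
    Set.BijOn (mirrorPD (m := m) (n := n))
      { f | IsHGPD m n β f ∧ Connectivity m n β f π }
      { f | IsHGPD m n (fun i => !β i) f ∧
        Connectivity m n (fun i => !β i) f (revConj π) } := by
  have hback := mapsTo_mirrorPD m n (fun i => !β i) (revConj π)
  simp only [Bool.not_not, revConj_revConj] at hback
  exact Set.InvOn.bijOn ⟨fun f _ => mirrorPD_mirrorPD f, fun f _ => mirrorPD_mirrorPD f⟩
    (mapsTo_mirrorPD m n β π) hback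

/-- The mirror map is a bijection from the HGPDs of type `β` with connectivity `π` to the
HGPDs of the opposite type `β̄` with connectivity `γ_n π γ_m`. -/
theorem mirror_bijection (m n : ℕ) (hm : 1 ≤ m) (hmn : m ≤ n)
    (β : Fin m → Bool) (π : Fin m ↪ Fin n) :
    Set.BijOn (mirrorPD (m := m) (n := n))
      { f | IsHGPD m n β f ∧ Connectivity m n β f π }
      { f | IsHGPD m n (fun i => !β i) f ∧
        Connectivity m n (fun i => !β i) f (revConj π) } :=
  mirror_bijection_general m n β π
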